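/- arXiv:1401.4330 — 9 statements merged into one kernel-verified Lean document; each statement's English description precedes it below -/
import Mathlib

section
/- Propositional Craig interpolation for partitioned sequents: if a quantifier-free sequent Γ₁ ; Γ₂ ⊢ Δ₁ ; Δ₂ (whose logical meaning is Γ₁, Γ₂ ⊢ Δ₁, Δ₂) is a tautology, then there exists a quantifier-free formula I such that (1) both Γ₁ ⊢ Δ₁, I and I, Γ₂ ⊢ Δ₂ are tautologies, and (2) every atom that appears in I appears both in Γ₁ ⊢ Δ₁ and in Γ₂ ⊢ Δ₂. -/
/-- Quantifier-free (propositional) formulas over atoms of type `A`. -/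
inductive PropForm (A : Type) : Type where
  | atom : A → PropForm A
  | verum : PropForm A
  | falsum : PropForm A
  | neg : PropForm A → PropForm A
  | and : PropForm A → PropForm A → PropForm A
  | or : PropForm A → PropForm A → PropForm A
  | imp : PropForm A → PropForm A → PropForm A

namespace PropForm

variable {A : Type}

/-- Evaluation of a propositional formula under an assignment of truth values to atoms. -/
def eval (v : A → Prop) : PropForm A → Prop
  | atom a => v a
  | verum => True
  | falsum => False
  | neg φ => ¬ eval v φ
  | and φ ψ => eval v φ ∧ eval v ψ
  | or φ ψ => eval v φ ∨ eval v ψ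
  | imp φ ψ => eval v φ → eval v ψ

/-- The set of atoms appearing in a formula. -/
def atoms : PropForm A → Set A
  | atom a => {a}
  | verum => ∅
  | falsum => ∅
  | neg φ => atoms φ
  | and φ ψ => atoms φ ∪ atoms ψ
  | or φ ψ => atoms φ ∪ atoms ψ
  | imp φ ψ => atoms φ ∪ atoms ψ

/-- A sequent `Γ ⊢ Δ` is a tautology iff, under every assignment, if all formulas of `Γ`
hold then some formula of `Δ` holds. -/
def SeqTaut (Γ Δ : List (PropForm A)) : Prop :=
  ∀ v : A → Prop, (∀ φ ∈ Γ, eval v φ) → ∃ ψ ∈ Δ, eval v ψ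

/-- The atoms appearing in a sequent. -/
def seqAtoms (Γ Δ : List (PropForm A)) : Set A :=
  (⋃ φ ∈ Γ, atoms φ) ∪ ⋃ ψ ∈ Δ, atoms ψ

end PropForm

open PropForm

/-!
The interpolant is the strongest one possible: the formula over the shared atoms that holds
exactly at the restrictions of the valuations satisfying `Γ₁` and refuting `Δ₁`. Such a formula
exists because any property of valuations that only looks at finitely many atoms is expressible
(Shannon expansion, one atom at a time). It entails `Δ₂` under `Γ₂` because a valuation
satisfying it and `Γ₂` can be glued along the shared atoms to a valuation satisfying `Γ₁` and
refuting `Δ₁`; the glued valuation satisfies `Γ₁, Γ₂`, hence some formula of `Δ₂`.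
-/

namespace PropForm

variable {A : Type}

theorem eval_congr {v w : A → Prop} :
    ∀ (φ : PropForm A), (∀ a ∈ atoms φ, (v a ↔ w a)) → (eval v φ ↔ eval w φ)
  | atom a, h => h a rfl
  | verum, _ | falsum, _ => .rfl
  | neg φ, h => not_congr (eval_congr φ h)
  | and φ ψ, h | or φ ψ, h | imp φ ψ, h => by
    simp only [atoms, Set.mem_union] at h
    have hφ := eval_congr φ fun a ha => h a (.inl ha)
    have hψ := eval_congr ψ fun a ha => h a (.inr ha)
    simp only [eval, hφ, hψ]

theorem atoms_finite : ∀ φ : PropForm A, (atoms φ).Finite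
  | atom _ => Set.finite_singleton _
  | verum | falsum => Set.finite_empty
  | neg φ => atoms_finite φ
  | and φ ψ | or φ ψ | imp φ ψ => (atoms_finite φ).union (atoms_finite ψ)

theorem seqAtoms_finite (Γ Δ : List (PropForm A)) : (seqAtoms Γ Δ).Finite :=
  (Γ.finite_toSet.biUnion fun φ _ => atoms_finite φ).union
    (Δ.finite_toSet.biUnion fun ψ _ => atoms_finite ψ)

theorem atoms_subset_seqAtoms_left {Γ Δ : List (PropForm A)} {φ : PropForm A} (hφ : φ ∈ Γ) :
    atoms φ ⊆ seqAtoms Γ Δ :=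
  fun _ ha => .inl (Set.mem_biUnion hφ ha)

theorem atoms_subset_seqAtoms_right {Γ Δ : List (PropForm A)} {ψ : PropForm A} (hψ : ψ ∈ Δ) :
    atoms ψ ⊆ seqAtoms Γ Δ :=
  fun _ ha => .inr (Set.mem_biUnion hψ ha)

theorem exists_formula_eval_iff {s : Set A} (hs : s.Finite) (P : (A → Prop) → Prop)
    (hP : ∀ v w, (∀ a ∈ s, (v a ↔ w a)) → (P v ↔ P w)) :
    ∃ φ : PropForm A, atoms φ ⊆ s ∧ ∀ v, eval v φ ↔ P v := by
  classical
  induction s, hs using Set.Finite.induction_on generalizing P with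
  | empty =>
    by_cases hP' : ∃ v, P v
    · obtain ⟨w, hw⟩ := hP'
      exact ⟨verum, subset_rfl, fun v => (iff_true_intro ((hP w v (by simp)).mp hw)).symm⟩
    · exact ⟨falsum, subset_rfl, fun v => (iff_false_intro fun hv => hP' ⟨v, hv⟩).symm⟩
  | @insert a s _ _ ih =>
    have update_agree {v w : A → Prop} (c : Prop) (hvw : ∀ b ∈ s, (v b ↔ w b)) :
        ∀ b ∈ insert a s, (Function.update v a c b ↔ Function.update w a c b) := by
      rintro b (rfl | hb)
      · simp
      · by_cases hba : b = a
        · simp [hba]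
        · simpa [hba] using hvw b hb
    obtain ⟨φ₁, hφ₁s, hφ₁⟩ := ih (fun v => P (Function.update v a True))
      fun v w hvw => hP _ _ (update_agree True hvw)
    obtain ⟨φ₀, hφ₀s, hφ₀⟩ := ih (fun v => P (Function.update v a False))
      fun v w hvw => hP _ _ (update_agree False hvw)
    have update_self {v : A → Prop} {c : Prop} (hc : c ↔ v a) :
        P (Function.update v a c) ↔ P v :=
      hP _ _ fun b _ => by by_cases hba : b = a <;> simp [hba, hc]
    refine ⟨or (and (atom a) φ₁) (and (neg (atom a)) φ₀), ?_, fun v => ?_⟩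
    · simp only [atoms, Set.union_subset_iff, Set.singleton_subset_iff]
      exact ⟨⟨Set.mem_insert a s, hφ₁s.trans (Set.subset_insert a s)⟩,
        Set.mem_insert a s, hφ₀s.trans (Set.subset_insert a s)⟩
    · by_cases hva : v a
      · simp [eval, hφ₁, hva, update_self (iff_true_intro hva).symm]
      · simp [eval, hφ₀, hva, update_self (iff_false_intro hva).symm]

theorem SeqTaut.exists_eval_of_agree {Γ₁ Γ₂ Δ₁ Δ₂ : List (PropForm A)}
    (h : SeqTaut (Γ₁ ++ Γ₂) (Δ₁ ++ Δ₂)) {v w : A → Prop}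
    (hvw : ∀ a ∈ seqAtoms Γ₁ Δ₁ ∩ seqAtoms Γ₂ Δ₂, (v a ↔ w a))
    (hvΓ₁ : ∀ φ ∈ Γ₁, eval v φ) (hvΔ₁ : ∀ ψ ∈ Δ₁, ¬ eval v ψ) (hwΓ₂ : ∀ φ ∈ Γ₂, eval w φ) :
    ∃ ψ ∈ Δ₂, eval w ψ := by
  classical
  let u : A → Prop := fun a => if a ∈ seqAtoms Γ₁ Δ₁ then v a else w a
  have huv : ∀ a ∈ seqAtoms Γ₁ Δ₁, (u a ↔ v a) := fun a ha => by simp [u, ha]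
  have huw : ∀ a ∈ seqAtoms Γ₂ Δ₂, (u a ↔ w a) := fun a ha => by
    by_cases ha₁ : a ∈ seqAtoms Γ₁ Δ₁
    · simp [u, ha₁, hvw a ⟨ha₁, ha⟩]
    · simp [u, ha₁]
  have huΓ : ∀ φ ∈ Γ₁ ++ Γ₂, eval u φ := by
    rintro φ hφ
    rcases List.mem_append.mp hφ with hφ | hφ
    · exact (eval_congr φ fun a ha => huv a (atoms_subset_seqAtoms_left hφ ha)).mpr (hvΓ₁ φ hφ)
    · exact (eval_congr φ fun a ha => huw a (atoms_subset_seqAtoms_left hφ ha)).mpr (hwΓ₂ φ hφ)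
  obtain ⟨ψ, hψ, huψ⟩ := h u huΓ
  rcases List.mem_append.mp hψ with hψ | hψ
  · exact absurd ((eval_congr ψ fun a ha => huv a (atoms_subset_seqAtoms_right hψ ha)).mp huψ)
      (hvΔ₁ ψ hψ)
  · exact ⟨ψ, hψ, (eval_congr ψ fun a ha => huw a (atoms_subset_seqAtoms_right hψ ha)).mp huψ⟩

end PropForm

/-- **propositional Craig interpolation for partitioned sequents.**
If the quantifier-free sequent `Γ₁ ; Γ₂ ⊢ Δ₁ ; Δ₂` (whose logical meaning is
`Γ₁, Γ₂ ⊢ Δ₁, Δ₂`) is a tautology, then there is a quantifier-free formula `I` such that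
(1) both `Γ₁ ⊢ Δ₁, I` and `I, Γ₂ ⊢ Δ₂` are tautologies, and
(2) every atom appearing in `I` appears both in `Γ₁ ⊢ Δ₁` and in `Γ₂ ⊢ Δ₂`. -/
theorem propositional_interpolation {A : Type}
    (Γ₁ Γ₂ Δ₁ Δ₂ : List (PropForm A))
    (h : SeqTaut (Γ₁ ++ Γ₂) (Δ₁ ++ Δ₂)) :
    ∃ I : PropForm A,
      SeqTaut Γ₁ (Δ₁ ++ [I]) ∧
      SeqTaut (I :: Γ₂) Δ₂ ∧
      atoms I ⊆ seqAtoms Γ₁ Δ₁ ∧ atoms I ⊆ seqAtoms Γ₂ Δ₂ := by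
  set S := seqAtoms Γ₁ Δ₁ ∩ seqAtoms Γ₂ Δ₂
  obtain ⟨I, hIS, hI⟩ := exists_formula_eval_iff ((seqAtoms_finite Γ₁ Δ₁).inter_of_left _)
    (fun v => ∃ w, (∀ a ∈ S, (w a ↔ v a)) ∧ (∀ φ ∈ Γ₁, eval w φ) ∧ ∀ ψ ∈ Δ₁, ¬ eval w ψ)
    fun v v' hvv' => exists_congr fun w =>
      and_congr_left' (forall₂_congr fun a ha => iff_congr .rfl (hvv' a ha))
  refine ⟨I, fun v hvΓ₁ => ?_, fun v hv => ?_, hIS.trans Set.inter_subset_left,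
    hIS.trans Set.inter_subset_right⟩
  · by_cases hvΔ₁ : ∃ ψ ∈ Δ₁, eval v ψ
    · obtain ⟨ψ, hψ, hvψ⟩ := hvΔ₁
      exact ⟨ψ, List.mem_append_left _ hψ, hvψ⟩
    · push Not at hvΔ₁
      exact ⟨I, by simp, (hI v).mpr ⟨v, fun _ _ => .rfl, hvΓ₁, hvΔ₁⟩⟩
  · obtain ⟨w, hwv, hwΓ₁, hwΔ₁⟩ := (hI v).mp (hv I List.mem_cons_self)
    exact h.exists_eval_of_agree hwv hwΓ₁ hwΔ₁
      fun φ hφ => hv φ (List.mem_cons_of_mem I hφ)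
end

section
/- The language of a totally rigid acyclic tree grammar is finite. -/
open FirstOrder Language

namespace RigidGrammars

variable {L : FirstOrder.Language} {N : Type}

/-- One-step derivation relation of a tree grammar: replace one occurrence of a
non-terminal by the right-hand side of a production. -/
inductive Deriv1 (P : Set (N × L.Term N)) : L.Term N → L.Term N → Prop
  | head {β : N} {t : L.Term N} : (β, t) ∈ P → Deriv1 P (Term.var β) t
  | func {l : ℕ} (f : L.Functions l) (ts ts' : Fin l → L.Term N) (i : Fin l) :
      Deriv1 P (ts i) (ts' i) → (∀ j, j ≠ i → ts' j = ts j) →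
      Deriv1 P (Term.func f ts) (Term.func f ts')

/-- The subterm of a term at a position (a list of argument indices), if defined. -/
def subtermAt : L.Term N → List ℕ → Option (L.Term N)
  | t, [] => some t
  | Term.var _, _ :: _ => none
  | Term.func (l := l) _ ts, i :: p => if h : i < l then subtermAt (ts ⟨i, h⟩) p else none

/-- The non-terminal `β` occurs in the term `t`. -/
def Occurs (β : N) (t : L.Term N) : Prop :=
  ∃ p : List ℕ, subtermAt t p = some (Term.var β)

/-- A rigid tree grammar: non-terminals `N`, rigid non-terminals `NR`, start symbol,
and a finite set of productions. -/
structure RTG (L : FirstOrder.Language) (N : Type) where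
  start : N
  NR : Set N
  P : Set (N × L.Term N)
  finP : P.Finite

/-- Totally rigid: all non-terminals are rigid. -/
def TotallyRigid (G : RTG L N) : Prop := G.NR = Set.univ

/-- Acyclic: there is no derivation `β →¹ … →¹ t` (of at least one step) with
`β` occurring in `t`. -/
def Acyclic (G : RTG L N) : Prop :=
  ¬ ∃ (β : N) (d : List (L.Term N)) (t : L.Term N),
      List.Chain (Deriv1 G.P) (Term.var β) (d ++ [t]) ∧ Occurs β t

/-- A derivation (in the underlying regular grammar) of the term `t` from the start
symbol, satisfying the rigidity condition: two occurrences of a rigid non-terminal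
anywhere in the derivation yield identical subterms of the derived term `t`. -/
def RigidDeriv (G : RTG L N) (d : List (L.Term N)) (t : L.Term N) : Prop :=
  d.Chain' (Deriv1 G.P) ∧ d.head? = some (Term.var G.start) ∧ d.getLast? = some t ∧
  ∀ β ∈ G.NR, ∀ u ∈ d, ∀ u' ∈ d, ∀ p q : List ℕ,
    subtermAt u p = some (Term.var β) → subtermAt u' q = some (Term.var β) →
    subtermAt t p = subtermAt t q

/-- The language of a rigid tree grammar: the ground terms derivable from the start
symbol under the rigidity condition. -/
def RigidLang (G : RTG L N) : Set (L.Term Empty) :=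
  { t | ∃ d : List (L.Term N), RigidDeriv G d (t.relabel (fun x : Empty => x.elim)) }

end RigidGrammars

/-!
Acyclicity makes the relation "`γ` occurs in a right-hand side of `β`" well-founded on the
finitely many non-terminals, so by well-founded recursion there are weights `w` with `w β`
larger than the total weight of the non-terminal occurrences in every right-hand side of `β`.
Every derivation step then strictly decreases the total weight of a term; as a term has only
finitely many one-step successors, König's lemma leaves only finitely many terms derivable
from the start symbol, and every word of the language is one of them.
-/

theorem Relation.TransGen.exists_isChain {α : Type*} {r : α → α → Prop} {a b : α}
    (h : Relation.TransGen r a b) : ∃ d, List.IsChain r (a :: (d ++ [b])) := by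
  induction h with
  | single hab => exact ⟨[], by simpa using hab⟩
  | tail _ hbc ih =>
    obtain ⟨d, hd⟩ := ih
    exact ⟨d ++ [_], by simpa using ⟨hd, hbc⟩⟩

-- König's lemma.
theorem Relation.finite_setOf_reflTransGen {α : Type*} {r : α → α → Prop}
    (hwf : WellFounded (flip r)) (hfin : ∀ a, {b | r a b}.Finite) (a : α) :
    {b | Relation.ReflTransGen r a b}.Finite := by
  induction a using hwf.induction with
  | _ a ih =>
    refine (((hfin a).biUnion fun b hab => ih b hab).insert a).subset fun c hac => ?_
    rcases hac.cases_head with rfl | ⟨b, hab, hbc⟩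
    · exact Set.mem_insert _ _
    · exact Set.mem_insert_of_mem _ (Set.mem_biUnion hab hbc)

theorem FirstOrder.Language.Term.relabel_injective {L : Language} {α β : Type*} {g : α → β}
    (hg : g.Injective) : (Term.relabel g : L.Term α → L.Term β).Injective := by
  intro t₁ t₂ h
  induction t₁ generalizing t₂ with
  | var a =>
    cases t₂ with
    | var b => exact congrArg _ (hg (Term.var.inj h))
    | func => simp [Term.relabel] at h
  | func f ts ih =>
    cases t₂ with
    | var => simp [Term.relabel] at h
    | func f' ts' =>
      simp only [Term.relabel, Term.func.injEq] at h
      obtain ⟨rfl, h₁, h₂⟩ := h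
      obtain rfl := eq_of_heq h₁
      congr 1
      exact funext fun i => ih i (congrFun (eq_of_heq h₂) i)

namespace RigidGrammars

variable {L : Language} {N : Type}

theorem occurs_var_iff {β γ : N} : Occurs β (Term.var γ : L.Term N) ↔ β = γ := by
  constructor
  · rintro ⟨_ | _, hp⟩ <;> simp_all [subtermAt]
  · rintro rfl
    exact ⟨[], rfl⟩

theorem occurs_func_iff {β : N} {l : ℕ} {f : L.Functions l} {ts : Fin l → L.Term N} :
    Occurs β (Term.func f ts) ↔ ∃ i, Occurs β (ts i) := by
  constructor
  · rintro ⟨_ | ⟨i, p⟩, hp⟩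
    · simp [subtermAt] at hp
    · rw [subtermAt] at hp
      split_ifs at hp with hi
      exact ⟨⟨i, hi⟩, p, hp⟩
  · rintro ⟨i, p, hp⟩
    exact ⟨i :: p, by simpa [subtermAt] using hp⟩

def varWeight (w : N → ℕ) : L.Term N → ℕ
  | .var β => w β
  | .func _ ts => ∑ i, varWeight w (ts i)

theorem varWeight_congr {w w' : N → ℕ} {t : L.Term N}
    (h : ∀ β, Occurs β t → w β = w' β) : varWeight w t = varWeight w' t := by
  induction t with
  | var β => exact h β (occurs_var_iff.2 rfl)
  | func f ts ih =>
    exact Finset.sum_congr rfl fun i _ => ih i fun β hβ => h β (occurs_func_iff.2 ⟨i, hβ⟩)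

variable {P : Set (N × L.Term N)}

theorem varWeight_lt_of_deriv1 {w : N → ℕ}
    (hw : ∀ β u, (β, u) ∈ P → varWeight w u < w β) {s t : L.Term N} (h : Deriv1 P s t) :
    varWeight w t < varWeight w s := by
  induction h with
  | head hmem => exact hw _ _ hmem
  | func f ts ts' i _ hother ih =>
    refine Finset.sum_lt_sum (fun j _ => ?_) ⟨i, Finset.mem_univ i, ih⟩
    rcases eq_or_ne j i with rfl | hj
    · exact ih.le
    · rw [hother j hj]

theorem wellFounded_flip_deriv1 {w : N → ℕ}
    (hw : ∀ β u, (β, u) ∈ P → varWeight w u < w β) : WellFounded (flip (Deriv1 P)) :=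
  Subrelation.wf (varWeight_lt_of_deriv1 hw) (InvImage.wf (varWeight w) wellFounded_lt)

theorem finite_setOf_deriv1 (hP : P.Finite) (s : L.Term N) : {t | Deriv1 P s t}.Finite := by
  induction s with
  | var β =>
    refine (hP.image Prod.snd).subset fun t ht => ?_
    cases ht with
    | head hmem => exact ⟨_, hmem, rfl⟩
  | func f ts ih =>
    refine (Set.finite_iUnion fun i =>
      (ih i).image fun s => Term.func f (Function.update ts i s)).subset fun t ht => ?_
    cases ht with
    | func _ _ ts' i hstep hother =>
      refine Set.mem_iUnion.2 ⟨i, ts' i, hstep, ?_⟩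
      change Term.func f (Function.update ts i (ts' i)) = Term.func f ts'
      congr 1
      funext j
      rcases eq_or_ne j i with rfl | hj
      · exact Function.update_self ..
      · rw [Function.update_of_ne hj, hother j hj]

def DependsOn (P : Set (N × L.Term N)) (β γ : N) : Prop :=
  ∃ u, (β, u) ∈ P ∧ Occurs γ u

theorem exists_deriv1_occurs {γ δ : N} {u : L.Term N} (hu : (γ, u) ∈ P) (hδ : Occurs δ u)
    {t : L.Term N} (hγ : Occurs γ t) : ∃ t', Deriv1 P t t' ∧ Occurs δ t' := by
  induction t with
  | var β =>
    obtain rfl := occurs_var_iff.1 hγ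
    exact ⟨u, .head hu, hδ⟩
  | func f ts ih =>
    obtain ⟨i, hi⟩ := occurs_func_iff.1 hγ
    obtain ⟨s, hs, hδs⟩ := ih i hi
    refine ⟨Term.func f (Function.update ts i s),
      .func f ts _ i (by rwa [Function.update_self]) fun j hj => Function.update_of_ne hj _ _,
      occurs_func_iff.2 ⟨i, by rwa [Function.update_self]⟩⟩

theorem exists_transGen_deriv1_of_transGen_dependsOn {β γ : N}
    (h : Relation.TransGen (DependsOn P) β γ) :
    ∃ t, Relation.TransGen (Deriv1 P) (Term.var β) t ∧ Occurs γ t := by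
  induction h with
  | single hβγ =>
    obtain ⟨u, hu, hγ⟩ := hβγ
    exact ⟨u, .single (.head hu), hγ⟩
  | tail _ hγδ ih =>
    obtain ⟨t, ht, hγ⟩ := ih
    obtain ⟨u, hu, hδ⟩ := hγδ
    obtain ⟨t', ht', hδ'⟩ := exists_deriv1_occurs hu hδ hγ
    exact ⟨t', ht.tail ht', hδ'⟩

theorem Acyclic.wellFounded_flip_dependsOn [Finite N] {G : RTG L N} (hac : Acyclic G) :
    WellFounded (flip (DependsOn G.P)) := by
  have : IsTrans N (flip (Relation.TransGen (DependsOn G.P))) :=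
    ⟨fun _ _ _ h₁ h₂ => h₂.trans h₁⟩
  have : Std.Irrefl (flip (Relation.TransGen (DependsOn G.P))) := ⟨fun β hβ => by
    obtain ⟨t, ht, hβt⟩ := exists_transGen_deriv1_of_transGen_dependsOn hβ
    obtain ⟨d, hd⟩ := ht.exists_isChain
    exact hac ⟨β, d, t, hd, hβt⟩⟩
  exact Subrelation.wf (r := flip (Relation.TransGen (DependsOn G.P))) (fun h => .single h)
    (Finite.wellFounded_of_trans_of_irrefl _)

theorem exists_weight_gt_varWeight (hP : P.Finite) (hwf : WellFounded (flip (DependsOn P))) :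
    ∃ w : N → ℕ, ∀ β u, (β, u) ∈ P → varWeight w u < w β := by
  classical
  let rhsWeight (β : N) (w : N → ℕ) : ℕ :=
    ∑ q ∈ hP.toFinset with q.1 = β, varWeight w q.2
  let w : N → ℕ := hwf.fix fun β rec => 1 + rhsWeight β fun γ =>
    if h : DependsOn P β γ then rec γ h else 0
  have hw (β : N) : w β = 1 + rhsWeight β fun γ => if DependsOn P β γ then w γ else 0 := by
    rw [show w β = _ from hwf.fix_eq _ β]
    simp only [dite_eq_ite]
    rfl
  refine ⟨w, fun β u hu => ?_⟩
  let wβ : N → ℕ := fun γ => if DependsOn P β γ then w γ else 0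
  have hmem : (β, u) ∈ {q ∈ hP.toFinset | q.1 = β} := by simpa using hu
  calc varWeight w u
      = varWeight wβ u := varWeight_congr fun γ hγ => (if_pos ⟨u, hu, hγ⟩).symm
    _ ≤ rhsWeight β wβ := Finset.single_le_sum (f := fun q => varWeight wβ q.2)
        (fun _ _ => Nat.zero_le _) hmem
    _ < w β := (Nat.lt_one_add_iff.2 le_rfl).trans_eq (hw β).symm

theorem RigidDeriv.reflTransGen {G : RTG L N} {d : List (L.Term N)} {t : L.Term N}
    (h : RigidDeriv G d t) : Relation.ReflTransGen (Deriv1 G.P) (Term.var G.start) t := by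
  obtain ⟨hchain, hhead, hlast, -⟩ := h
  have hne : d ≠ [] := by rintro rfl; simp at hhead
  rw [List.head?_eq_some_head hne, Option.some_inj] at hhead
  rw [List.getLast?_eq_some_getLast hne, Option.some_inj] at hlast
  simpa [hhead, hlast] using List.relationReflTransGen_of_exists_isChain d hchain hne

end RigidGrammars

open RigidGrammars

theorem totally_rigid_acyclic_lang_finite_general
    (L : FirstOrder.Language) (N : Type) [Fintype N]
    (G : RTG L N) (hac : Acyclic G) :
    (RigidLang G).Finite := by
  obtain ⟨w, hw⟩ := exists_weight_gt_varWeight G.finP hac.wellFounded_flip_dependsOn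
  have hreach : {t | Relation.ReflTransGen (Deriv1 G.P) (Term.var G.start) t}.Finite :=
    Relation.finite_setOf_reflTransGen (wellFounded_flip_deriv1 hw)
      (finite_setOf_deriv1 G.finP) _
  have hinj : (Term.relabel (Empty.elim : Empty → N) : L.Term Empty → L.Term N).Injective :=
    Term.relabel_injective (Function.injective_of_subsingleton _)
  refine (hreach.preimage hinj.injOn).subset ?_
  rintro t ⟨d, hd⟩
  exact hd.reflTransGen

/-- The language of a totally rigid acyclic tree grammar is finite. -/
theorem totally_rigid_acyclic_lang_finite
    (L : FirstOrder.Language) (N : Type) [Fintype N]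
    (G : RTG L N) (htr : TotallyRigid G) (hac : Acyclic G) :
    (RigidLang G).Finite :=
  totally_rigid_acyclic_lang_finite_general L N G hac
end

section
/- Validity of the top of the canonical solution: define C₁ = ⋀_{i=1}^m F[x:=u_i] and C_{r+1} = ⋀_{j=1}^{k_r} C_r[α_r:=s_{r,j}] for r = 1,…,n. If the conjunction of all instances F[x:=u_i][α₁:=s_{1,j₁}]⋯[αₙ:=s_{n,jₙ}] (over all 1 ≤ i ≤ m and all choices 1 ≤ j_l ≤ k_l) is unsatisfiable, then C_{n+1} is unsatisfiable, i.e. the sequent C_{n+1} ⊢ is a tautology. -/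
open FirstOrder Language

/-- Conjunction of a list of formulas. -/
def conjList {L : FirstOrder.Language} {β : Type} : List (L.Formula β) → L.Formula β :=
  fun l => l.foldr (fun φ ψ => φ ⊓ ψ) ⊤

/-- The instance `F[x:=u_i][α₀:=s₀,ⱼ₀]⋯[α_{n-1}:=s_{n-1},j_{n-1}]`. -/
def herbrandInstance (L : FirstOrder.Language) (n m : ℕ)
    (F : L.Formula (Fin 1)) (u : Fin m → L.Term (Fin n))
    (k : Fin n → ℕ) (s : (i : Fin n) → Fin (k i) → L.Term (Fin n))
    (i : Fin m) (j : (r : Fin n) → Fin (k r)) : L.Formula (Fin n) :=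
  (List.finRange n).foldl
    (fun φ r => φ.subst (Function.update Term.var r (s r (j r))))
    (F.subst (fun _ => u i))

/-- The formulas of the canonical substitution: `canonicalC … 0 = C₁ = ⋀_i F[x:=u_i]`
and `canonicalC … (r+1) = C_{r+2} = ⋀_j C_{r+1}[α_{r+1}:=s_{r+1,j}]` (0-indexed: the
paper's `C_{r+1}` is `canonicalC … r`). -/
def canonicalC (L : FirstOrder.Language) (n m : ℕ)
    (F : L.Formula (Fin 1)) (u : Fin m → L.Term (Fin n))
    (k : Fin n → ℕ) (s : (i : Fin n) → Fin (k i) → L.Term (Fin n)) :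
    ℕ → L.Formula (Fin n)
  | 0 => conjList ((List.finRange m).map (fun i => F.subst (fun _ => u i)))
  | r + 1 =>
    if h : r < n then
      conjList ((List.finRange (k ⟨r, h⟩)).map
        (fun j => (canonicalC L n m F u k s r).subst
          (Function.update Term.var ⟨r, h⟩ (s ⟨r, h⟩ j))))
    else canonicalC L n m F u k s r


lemma realize_conjList {L : FirstOrder.Language} {β : Type} {M : Type} [L.Structure M]
    (l : List (L.Formula β)) (v : β → M) :
    Formula.Realize (conjList l) v ↔ ∀ φ ∈ l, Formula.Realize φ v := by
  induction l with
  | nil => simp [conjList]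
  | cons a t ih =>
    simp only [conjList, List.foldr_cons, Formula.realize_inf, List.mem_cons]
    constructor
    · rintro ⟨h1, h2⟩ φ (rfl | hφ)
      · exact h1
      · exact ih.1 h2 φ hφ
    · intro h
      exact ⟨h a (Or.inl rfl), ih.2 fun φ hφ => h φ (Or.inr hφ)⟩

lemma canonicalC_key (L : FirstOrder.Language) (n m : ℕ)
    (F : L.Formula (Fin 1)) (u : Fin m → L.Term (Fin n))
    (k : Fin n → ℕ) (s : (i : Fin n) → Fin (k i) → L.Term (Fin n)) :
    ∀ r, r ≤ n → ∀ (M : Type) [L.Structure M] (v : Fin n → M),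
      Formula.Realize (M := M) (canonicalC L n m F u k s r) v →
      ∀ (i : Fin m) (j : (l : Fin n) → Fin (k l)),
        Formula.Realize (M := M)
          (((List.finRange n).take r).foldl
            (fun φ r' => φ.subst (Function.update Term.var r' (s r' (j r'))))
            (F.subst (fun _ => u i))) v := by
  intro r
  induction r with
  | zero =>
    intro _ M _ v hv i j
    simp only [List.take_zero, List.foldl_nil]
    rw [canonicalC] at hv
    exact (realize_conjList _ v).1 hv _ (List.mem_map.2 ⟨i, List.mem_finRange i, rfl⟩)
  | succ r ih =>
    intro hr M _ v hv i j
    have h : r < n := hr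
    rw [canonicalC, dif_pos h] at hv
    have hstep := (realize_conjList _ v).1 hv _
      (List.mem_map.2 ⟨j ⟨r, h⟩, List.mem_finRange _, rfl⟩)
    rw [Formula.Realize, BoundedFormula.realize_subst] at hstep
    have := ih (le_of_lt h) M _ hstep i j
    have htake : (List.finRange n).take (r + 1)
        = (List.finRange n).take r ++ [⟨r, h⟩] := by
      rw [List.take_succ]
      congr 1
      rw [List.getElem?_eq_getElem (by simpa using h)]
      simp
    rw [htake, List.foldl_append, List.foldl_cons, List.foldl_nil]
    rw [Formula.Realize, BoundedFormula.realize_subst]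
    exact this

/-- **validity of the top of the canonical solution.**
With `C₁ = ⋀_i F[x:=u_i]` and `C_{r+1} = ⋀_j C_r[α_r:=s_{r,j}]`: if the conjunction of
all instances `F[x:=u_i][α₁:=s_{1,j₁}]⋯[αₙ:=s_{n,jₙ}]` is unsatisfiable, then `C_{n+1}`
is unsatisfiable, i.e. the sequent `C_{n+1} ⊢` is a tautology. -/
theorem canonical_top_unsat
    (L : FirstOrder.Language) (n m : ℕ)
    (F : L.Formula (Fin 1)) (hF : F.IsQF)
    (u : Fin m → L.Term (Fin n))
    (k : Fin n → ℕ)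
    (s : (i : Fin n) → Fin (k i) → L.Term (Fin n))
    (hs : ∀ i j, ∀ γ ∈ (s i j).varFinset, i < γ)
    (hT : ∀ (M : Type) [L.Structure M] [Nonempty M] (v : Fin n → M),
        ¬ ∀ (i : Fin m) (j : (r : Fin n) → Fin (k r)),
            Formula.Realize (M := M) (herbrandInstance L n m F u k s i j) v) :
    ∀ (M : Type) [L.Structure M] [Nonempty M] (v : Fin n → M),
      ¬ Formula.Realize (M := M) (canonicalC L n m F u k s n) v := by
  intro M _ _ v hv
  apply hT M v
  intro i j
  have := canonicalC_key L n m F u k s n le_rfl M v hv i j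
  rw [List.take_of_length_le (by simp)] at this
  exact this
end

section
/- Triviality of the Δ-vector is monotone: let T be a finite sequence of first-order terms. If Δ(T) = (α, T) (i.e. the Δ-vector of T is trivial), then Δ(T′) = (α, T′) for every finite sequence of terms T′ that contains all terms of T. -/
namespace DeltaVec

/-- First-order terms over head symbols `F`, together with the single fresh
variable `α` (the constructor `var`). -/
inductive Tm (F : Type) : Type where
  | var : Tm F
  | node : F → List (Tm F) → Tm F

namespace Tm

variable {F : Type}

/-- A ground term: one built only from function symbols (no occurrence of `α`). -/
inductive Ground : Tm F → Prop
  | node (f : F) (ts : List (Tm F)) : (∀ t ∈ ts, Ground t) → Ground (node f ts)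

/-- The depth of a term. -/
def depth : Tm F → ℕ
  | var => 0
  | node _ ts => (ts.attach.map (fun x => depth x.1)).foldr max 0 + 1
decreasing_by
  have := List.sizeOf_lt_of_mem x.2
  simp only [Tm.node.sizeOf_spec]
  omega

end Tm

end DeltaVec

namespace DeltaVec
open scoped Classical

variable {F : Type}

/-- Fuel-indexed computation of the Δ-vector.  The second component `none` means
"unconstrained" (which occurs exactly when all input terms are equal, so that the
variable `α` does not occur in the first component). -/
noncomputable def deltaAux : ℕ → List (Tm F) → Tm F × Option (List (Tm F))
  | 0, ts => (Tm.var, some ts)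
  | d + 1, ts =>
    if ts = [] then (Tm.var, some ts)
    else if ∀ x ∈ ts, x = ts.headD Tm.var then (ts.headD Tm.var, none)
    else if h : ∃ r : F × List (List (Tm F)) × ℕ × List (Tm F) × List (Tm F),
        ts = r.2.1.map (Tm.node r.1) ∧
        (∀ a ∈ r.2.1, a.length = r.2.2.1) ∧
        r.2.2.2.1.length = r.2.2.1 ∧
        (∀ j < r.2.2.1,
          deltaAux d (r.2.1.map (fun a => a.getD j Tm.var)) =
            (r.2.2.2.1.getD j Tm.var, none) ∨
          deltaAux d (r.2.1.map (fun a => a.getD j Tm.var)) =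
            (r.2.2.2.1.getD j Tm.var, some r.2.2.2.2)) then
      (Tm.node h.choose.1 h.choose.2.2.2.1, some h.choose.2.2.2.2)
    else (Tm.var, some ts)

/-- The Δ-vector of a sequence of terms (the fuel `max depth + 1` suffices for the
recursion of the definition). -/
noncomputable def delta (ts : List (Tm F)) : Tm F × Option (List (Tm F)) :=
  deltaAux ((ts.map Tm.depth).foldr max 0 + 1) ts

end DeltaVec

/-!
If `Δ(ts) = (u, some s)` with `u ≠ α`, then `s = ts.map g` for a selection `g` of proper
subterms at a common position, so `g` strictly lowers depth. Selections pass to sub-sequences: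
if `Δ(ts')` selects `ts'.map g` and `ts ⊆ ts'` is not constant, then `Δ(ts)` and `Δ(ts.map g)`
have the same second component (induction on depth, column by column). So if `Δ(T')` were
nontrivial, selecting `T'.map g`, then `T = (Δ T).2 = (Δ (T.map g)).2` would be a selection of
subterms of the strictly shallower terms `T.map g`, which is absurd.
-/

namespace DeltaVec
open scoped Classical

variable {F : Type}

namespace Tm

def args : Tm F → List (Tm F)
  | var => []
  | node _ a => a

def arg (j : ℕ) (t : Tm F) : Tm F := t.args.getD j var

end Tm

variable {ts ts' s : List (Tm F)} {f : F} {m : ℕ}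

def maxDepth (ts : List (Tm F)) : ℕ := (ts.map Tm.depth).foldr max 0

theorem le_maxDepth {t : Tm F} (h : t ∈ ts) : t.depth ≤ maxDepth ts :=
  List.le_max_of_le (List.mem_map_of_mem h) le_rfl

theorem maxDepth_map_lt {g : Tm F → Tm F} (hne : ts ≠ [])
    (h : ∀ t ∈ ts, (g t).depth < t.depth) : maxDepth (ts.map g) < maxDepth ts := by
  obtain ⟨t₀, ht₀⟩ := List.exists_mem_of_ne_nil ts hne
  have h₀ := (h t₀ ht₀).trans_le (le_maxDepth ht₀)
  have : maxDepth (ts.map g) ≤ maxDepth ts - 1 := by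
    refine List.max_le_of_forall_le _ _ fun x hx => ?_
    rw [List.map_map] at hx
    obtain ⟨t, ht, rfl⟩ := List.mem_map.1 hx
    have := (h t ht).trans_le (le_maxDepth ht)
    simp only [Function.comp_apply]
    omega
  omega

theorem depth_node (a : List (Tm F)) : (Tm.node f a).depth = maxDepth a + 1 := by
  rw [Tm.depth, List.map_attach_eq_pmap, List.pmap_eq_map]
  rfl

theorem depth_arg_node_lt (j : ℕ) (a : List (Tm F)) :
    ((Tm.node f a).arg j).depth < (Tm.node f a).depth := by
  rw [depth_node]
  by_cases hj : j < a.length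
  · have := le_maxDepth (a.getElem_mem hj)
    simp only [Tm.arg, Tm.args, List.getD_eq_getElem _ _ hj]
    omega
  · simp only [Tm.arg, Tm.args, List.getD_eq_default _ _ (not_lt.1 hj), Tm.depth]
    omega

def AllEq (ts : List (Tm F)) : Prop := ∀ t ∈ ts, t = ts.headD Tm.var

theorem AllEq.of_subset (h : AllEq ts') (hsub : ∀ t ∈ ts, t ∈ ts') : AllEq ts := by
  intro t ht
  have hhead : ts.headD Tm.var ∈ ts := by
    cases ts with
    | nil => cases ht
    | cons _ _ => exact List.mem_cons_self
  rw [h t (hsub t ht), h _ (hsub _ hhead)]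

theorem ne_nil_of_not_allEq (h : ¬AllEq ts) : ts ≠ [] := by
  rintro rfl
  exact h fun _ ht => (List.not_mem_nil ht).elim

theorem map_arg_ne_nil_of_not_allEq (h : ¬AllEq ts) (j : ℕ) : ts.map (Tm.arg j) ≠ [] := by
  simpa using ne_nil_of_not_allEq h

def HasHead (f : F) (m : ℕ) (ts : List (Tm F)) : Prop :=
  ∀ t ∈ ts, ∃ a : List (Tm F), a.length = m ∧ t = Tm.node f a

theorem hasHead_of_eq_map_node {as : List (List (Tm F))} (hts : ts = as.map (Tm.node f))
    (hlen : ∀ a ∈ as, a.length = m) : HasHead f m ts := fun t ht => by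
  obtain ⟨a, ha, rfl⟩ := List.mem_map.1 (hts ▸ ht)
  exact ⟨a, hlen a ha, rfl⟩

namespace HasHead

theorem arity_eq {f' : F} {m' : ℕ} (hne : ts ≠ []) (h : HasHead f m ts)
    (h' : HasHead f' m' ts) : m = m' := by
  obtain ⟨t, ht⟩ := List.exists_mem_of_ne_nil ts hne
  obtain ⟨a, rfl, rfl⟩ := h t ht
  obtain ⟨a', rfl, heq⟩ := h' _ ht
  cases heq
  rfl

theorem maxDepth_map_arg_lt (hne : ts ≠ []) (h : HasHead f m ts) (j : ℕ) :
    maxDepth (ts.map (Tm.arg j)) < maxDepth ts :=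
  maxDepth_map_lt hne fun t ht => by
    obtain ⟨a, -, rfl⟩ := h t ht
    exact depth_arg_node_lt j a

theorem depth_comp_arg_lt {g : Tm F → Tm F} {j : ℕ} (h : HasHead f m ts)
    (hg : ∀ x ∈ ts.map (Tm.arg j), (g x).depth ≤ x.depth) :
    ∀ t ∈ ts, (g (t.arg j)).depth < t.depth := by
  intro t ht
  have hle := hg _ (List.mem_map_of_mem ht)
  obtain ⟨a, -, rfl⟩ := h t ht
  exact hle.trans_lt (depth_arg_node_lt j a)

theorem exists_not_allEq_map_arg (h : HasHead f m ts) (hnae : ¬AllEq ts) :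
    ∃ j < m, ¬AllEq (ts.map (Tm.arg j)) := by
  by_contra! hcols
  refine hnae fun t ht => ?_
  obtain ⟨t₀, l, rfl⟩ := List.exists_cons_of_ne_nil (ne_nil_of_not_allEq hnae)
  obtain ⟨a, ha, rfl⟩ := h t ht
  obtain ⟨b, hb, rfl⟩ := h t₀ List.mem_cons_self
  refine congrArg _ (List.ext_getElem (ha.trans hb.symm) fun i hia hib => ?_)
  have := hcols i (ha ▸ hia) _ (List.mem_map_of_mem (f := Tm.arg i) ht)
  simp only [Tm.arg, Tm.args, List.map_cons, List.headD_cons] at this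
  rwa [List.getD_eq_getElem _ _ hia, List.getD_eq_getElem _ _ hib] at this

end HasHead

/-- A witness `(f, argument lists, m, first components, second component)` of the
decomposition branch of `deltaAux`. -/
abbrev Witness (F : Type) : Type := F × List (List (Tm F)) × ℕ × List (Tm F) × List (Tm F)

/-- The decomposition condition of `deltaAux (d + 1)`, verbatim. -/
def CondAt (d : ℕ) (ts : List (Tm F)) (r : Witness F) : Prop :=
  ts = r.2.1.map (Tm.node r.1) ∧
  (∀ a ∈ r.2.1, a.length = r.2.2.1) ∧
  r.2.2.2.1.length = r.2.2.1 ∧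
  (∀ j < r.2.2.1,
    deltaAux d (r.2.1.map (fun a => a.getD j Tm.var)) =
      (r.2.2.2.1.getD j Tm.var, none) ∨
    deltaAux d (r.2.1.map (fun a => a.getD j Tm.var)) =
      (r.2.2.2.1.getD j Tm.var, some r.2.2.2.2))

/-- `deltaAux (d + 1)` with its decomposition condition abstracted, so that changing the fuel
only changes `P`. -/
noncomputable def deltaStep (ts : List (Tm F)) (P : Witness F → Prop) :
    Tm F × Option (List (Tm F)) :=
  if ts = [] then (Tm.var, some ts)
  else if ∀ x ∈ ts, x = ts.headD Tm.var then (ts.headD Tm.var, none)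
  else if h : ∃ r, P r then (Tm.node h.choose.1 h.choose.2.2.2.1, some h.choose.2.2.2.2)
  else (Tm.var, some ts)

theorem deltaAux_succ (d : ℕ) (ts : List (Tm F)) :
    deltaAux (d + 1) ts = deltaStep ts (CondAt d ts) := by
  rw [deltaAux]
  rfl

theorem delta_eq_deltaStep (ts : List (Tm F)) :
    delta ts = deltaStep ts (CondAt (maxDepth ts) ts) :=
  deltaAux_succ _ _

theorem deltaStep_congr {P Q : Witness F → Prop} (h : ts ≠ [] → ∀ r, P r ↔ Q r) :
    deltaStep ts P = deltaStep ts Q := by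
  by_cases hne : ts = []
  · simp only [deltaStep, if_pos hne]
  · rw [funext fun r => propext (h hne r)]

theorem allEq_of_deltaStep_snd_eq_none {P : Witness F → Prop}
    (h : (deltaStep ts P).2 = none) : AllEq ts := by
  unfold deltaStep at h
  split_ifs at h with _ hae
  exact hae

theorem map_getD_eq_map_arg {as : List (List (Tm F))} (hts : ts = as.map (Tm.node f)) (j : ℕ) :
    as.map (fun a => a.getD j Tm.var) = ts.map (Tm.arg j) := by
  rw [hts, List.map_map]
  rfl

theorem deltaAux_eq_of_lt {d e : ℕ} (hd : maxDepth ts < d) (he : maxDepth ts < e) :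
    deltaAux d ts = deltaAux e ts := by
  induction d using Nat.strong_induction_on generalizing e ts with
  | _ d ih =>
  obtain ⟨d, rfl⟩ : ∃ d', d = d' + 1 := ⟨d - 1, by omega⟩
  obtain ⟨e, rfl⟩ : ∃ e', e = e' + 1 := ⟨e - 1, by omega⟩
  rw [deltaAux_succ, deltaAux_succ]
  refine deltaStep_congr fun hne r => ?_
  refine and_congr_right fun hts => and_congr_right fun hlen => and_congr_right fun _ =>
    forall₂_congr fun j _ => ?_
  have hcol := (hasHead_of_eq_map_node hts hlen).maxDepth_map_arg_lt hne j
  rw [map_getD_eq_map_arg hts, ih d (by omega) (e := e) (ts := ts.map (Tm.arg j)) (by omega)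
    (by omega)]

theorem deltaAux_eq_delta {d : ℕ} (hd : maxDepth ts < d) : deltaAux d ts = delta ts :=
  deltaAux_eq_of_lt hd (Nat.lt_succ_self _)

theorem delta_nil : delta ([] : List (Tm F)) = (Tm.var, some []) := by
  rw [delta_eq_deltaStep, deltaStep, if_pos rfl]

theorem delta_of_allEq (hne : ts ≠ []) (h : AllEq ts) : delta ts = (ts.headD Tm.var, none) := by
  rw [delta_eq_deltaStep, deltaStep, if_neg hne, if_pos (show ∀ x ∈ ts, _ from h)]

theorem delta_snd_eq_none_iff (hne : ts ≠ []) : (delta ts).2 = none ↔ AllEq ts :=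
  ⟨fun h => allEq_of_deltaStep_snd_eq_none (delta_eq_deltaStep ts ▸ h),
    fun h => by rw [delta_of_allEq hne h]⟩

/-- `Δ(ts)` takes the decomposing branch with head `f`, arity `m` and second component `s`;
columns of equal terms (second component `none`) impose no constraint. -/
def Decomposes (ts : List (Tm F)) (f : F) (m : ℕ) (s : List (Tm F)) : Prop :=
  HasHead f m ts ∧ ∀ j < m,
    (delta (ts.map (Tm.arg j))).2 = none ∨ (delta (ts.map (Tm.arg j))).2 = some s

theorem Decomposes.exists_map_arg (h : Decomposes ts f m s) (hnae : ¬AllEq ts) :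
    ∃ j < m, (delta (ts.map (Tm.arg j))).2 = some s := by
  obtain ⟨j, hj, hnc⟩ := h.1.exists_not_allEq_map_arg hnae
  refine ⟨j, hj, (h.2 j hj).resolve_left fun hnone => hnc ?_⟩
  exact (delta_snd_eq_none_iff (map_arg_ne_nil_of_not_allEq hnae j)).1 hnone

theorem Decomposes.snd_eq {s' : List (Tm F)} {f' : F} {m' : ℕ} (h : Decomposes ts f m s)
    (h' : Decomposes ts f' m' s') (hnae : ¬AllEq ts) : s = s' := by
  obtain ⟨j, hj, hs⟩ := h.exists_map_arg hnae
  rw [h.1.arity_eq (ne_nil_of_not_allEq hnae) h'.1] at hj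
  rcases h'.2 j hj with hnone | hs'
  · exact (Option.some_ne_none s (hs.symm.trans hnone)).elim
  · exact Option.some_injective _ (hs.symm.trans hs')

theorem decomposes_of_condAt (hne : ts ≠ []) {r : Witness F}
    (h : CondAt (maxDepth ts) ts r) : Decomposes ts r.1 r.2.2.1 r.2.2.2.2 := by
  obtain ⟨hts, hlen, -, hcond⟩ := h
  have hhead := hasHead_of_eq_map_node hts hlen
  refine ⟨hhead, fun j hj => ?_⟩
  have hcol := hcond j hj
  rw [map_getD_eq_map_arg hts, deltaAux_eq_delta (hhead.maxDepth_map_arg_lt hne j)] at hcol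
  rcases hcol with hcol | hcol <;> rw [hcol] <;> simp

theorem condAt_of_decomposes (hne : ts ≠ []) (h : Decomposes ts f m s) :
    CondAt (maxDepth ts) ts
      (f, ts.map Tm.args, m, (List.range m).map fun j => (delta (ts.map (Tm.arg j))).1, s) := by
  obtain ⟨hhead, hcols⟩ := h
  have hts : ts = (ts.map Tm.args).map (Tm.node f) := by
    rw [List.map_map]
    conv_lhs => rw [← List.map_id ts]
    refine List.map_congr_left fun t ht => ?_
    obtain ⟨a, -, rfl⟩ := hhead t ht
    rfl
  refine ⟨hts, fun a ha => ?_, by simp, fun j hj => ?_⟩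
  · obtain ⟨t, ht, rfl⟩ := List.mem_map.1 ha
    obtain ⟨a, rfl, rfl⟩ := hhead t ht
    rfl
  · rw [map_getD_eq_map_arg hts, deltaAux_eq_delta (hhead.maxDepth_map_arg_lt hne j),
      List.getD_eq_getElem _ _ (by simpa using hj), List.getElem_map, List.getElem_range]
    rcases hcols j hj with hcol | hcol <;> rw [← hcol] <;> simp

theorem delta_snd_of_decomposes (hnae : ¬AllEq ts) (h : Decomposes ts f m s) :
    (delta ts).2 = some s := by
  have hne := ne_nil_of_not_allEq hnae
  have hex : ∃ r, CondAt (maxDepth ts) ts r := ⟨_, condAt_of_decomposes hne h⟩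
  rw [delta_eq_deltaStep, deltaStep, if_neg hne, if_neg (show ¬∀ x ∈ ts, _ from hnae),
    dif_pos hex]
  exact congrArg some ((decomposes_of_condAt hne hex.choose_spec).snd_eq h hnae)

theorem delta_of_not_decomposes (hnae : ¬AllEq ts) (h : ∀ f m s, ¬Decomposes ts f m s) :
    delta ts = (Tm.var, some ts) := by
  have hne := ne_nil_of_not_allEq hnae
  rw [delta_eq_deltaStep, deltaStep, if_neg hne, if_neg (show ¬∀ x ∈ ts, _ from hnae),
    dif_neg fun ⟨_, hr⟩ => h _ _ _ (decomposes_of_condAt hne hr)]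

theorem HasHead.delta_snd_eq {o : Option (List (Tm F))} (hhead : HasHead f m ts)
    (hnae : ¬AllEq ts)
    (hcol : ∀ j < m, ¬AllEq (ts.map (Tm.arg j)) → (delta (ts.map (Tm.arg j))).2 = o) :
    (delta ts).2 = o := by
  obtain ⟨j₀, hj₀, hnc₀⟩ := hhead.exists_not_allEq_map_arg hnae
  obtain ⟨σ, rfl⟩ : ∃ σ, o = some σ := by
    rw [← hcol j₀ hj₀ hnc₀, ← Option.ne_none_iff_exists']
    exact mt (delta_snd_eq_none_iff (map_arg_ne_nil_of_not_allEq hnae j₀)).1 hnc₀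
  refine delta_snd_of_decomposes hnae ⟨hhead, fun j hj => ?_⟩
  by_cases hc : AllEq (ts.map (Tm.arg j))
  · exact .inl ((delta_snd_eq_none_iff (map_arg_ne_nil_of_not_allEq hnae j)).2 hc)
  · exact .inr (hcol j hj hc)

theorem delta_snd_eq_some_cases (h : (delta ts).2 = some s) :
    s = ts ∨ ¬AllEq ts ∧ ∃ f m, Decomposes ts f m s := by
  by_cases hae : AllEq ts
  · rcases eq_or_ne ts [] with rfl | hne
    · rw [delta_nil] at h
      exact .inl (Option.some_injective _ h).symm
    · rw [delta_of_allEq hne hae] at h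
      cases h
  by_cases hdec : ∃ f m s, Decomposes ts f m s
  · obtain ⟨f, m, s', hs'⟩ := hdec
    rw [delta_snd_of_decomposes hae hs'] at h
    exact .inr ⟨hae, f, m, Option.some_injective _ h ▸ hs'⟩
  · simp only [not_exists] at hdec
    rw [delta_of_not_decomposes hae hdec] at h
    exact .inl (Option.some_injective _ h).symm

theorem exists_map_of_delta_snd_eq_some (h : (delta ts).2 = some s) :
    ∃ g : Tm F → Tm F, s = ts.map g ∧ ∀ t ∈ ts, (g t).depth ≤ t.depth := by
  induction hN : maxDepth ts using Nat.strong_induction_on generalizing ts s with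
  | _ N ih =>
  rcases delta_snd_eq_some_cases h with rfl | ⟨hnae, f, m, hdec⟩
  · exact ⟨id, (List.map_id _).symm, fun _ _ => le_rfl⟩
  obtain ⟨j, -, hcol⟩ := hdec.exists_map_arg hnae
  obtain ⟨g, rfl, hg⟩ :=
    ih _ (hN ▸ hdec.1.maxDepth_map_arg_lt (ne_nil_of_not_allEq hnae) j) hcol rfl
  exact ⟨g ∘ Tm.arg j, List.map_map .., fun t ht => (hdec.1.depth_comp_arg_lt hg t ht).le⟩

theorem Decomposes.exists_map_depth_lt (h : Decomposes ts f m s) (hnae : ¬AllEq ts) :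
    ∃ g : Tm F → Tm F, s = ts.map g ∧ ∀ t ∈ ts, (g t).depth < t.depth := by
  obtain ⟨j, -, hcol⟩ := h.exists_map_arg hnae
  obtain ⟨g, rfl, hg⟩ := exists_map_of_delta_snd_eq_some hcol
  exact ⟨g ∘ Tm.arg j, List.map_map .., h.1.depth_comp_arg_lt hg⟩

theorem delta_snd_map_ne_self {g : Tm F → Tm F} (hne : ts ≠ [])
    (hg : ∀ t ∈ ts, (g t).depth < t.depth) : (delta (ts.map g)).2 ≠ some ts := by
  intro h
  obtain ⟨g₂, hg₂, hg₂le⟩ := exists_map_of_delta_snd_eq_some h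
  obtain ⟨t, ht⟩ := List.exists_mem_of_ne_nil ts hne
  rw [List.map_map] at hg₂
  have hret : g₂ (g t) = t := (List.map_eq_map_iff.1 ((List.map_id ts).trans hg₂) t ht).symm
  have hle := hg₂le (g t) (List.mem_map_of_mem ht)
  rw [hret] at hle
  exact (hg t ht).not_ge hle

theorem delta_snd_eq_of_subset {g : Tm F → Tm F} (hsub : ∀ t ∈ ts, t ∈ ts')
    (hnae : ¬AllEq ts) (h : (delta ts').2 = some (ts'.map g)) :
    (delta ts).2 = (delta (ts.map g)).2 := by
  induction hN : maxDepth ts' using Nat.strong_induction_on generalizing ts ts' g with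
  | _ N ih =>
  rcases delta_snd_eq_some_cases h with hid | ⟨hnae', f, m, hdec'⟩
  · have hg : ∀ t ∈ ts', g t = t := by
      simpa using List.map_eq_map_iff.1 (hid.trans (List.map_id ts').symm)
    rw [List.map_congr_left (fun t ht => hg t (hsub t ht)), List.map_id']
  have hsub_col : ∀ j, ∀ x ∈ ts.map (Tm.arg j), x ∈ ts'.map (Tm.arg j) := fun j x hx => by
    obtain ⟨t, ht, rfl⟩ := List.mem_map.1 hx
    exact List.mem_map_of_mem (hsub t ht)
  refine HasHead.delta_snd_eq (fun t ht => hdec'.1 t (hsub t ht)) hnae fun j hj hnc => ?_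
  have hs' : (delta (ts'.map (Tm.arg j))).2 = some (ts'.map g) :=
    (hdec'.2 j hj).resolve_left fun hnone => hnc <|
      ((delta_snd_eq_none_iff (map_arg_ne_nil_of_not_allEq hnae' j)).1 hnone).of_subset
        (hsub_col j)
  obtain ⟨gj, hgj, -⟩ := exists_map_of_delta_snd_eq_some hs'
  have hg : ∀ t ∈ ts', g t = gj (t.arg j) := by
    rw [List.map_map] at hgj
    exact List.map_eq_map_iff.1 hgj
  rw [hgj] at hs'
  rw [ih _ (hN ▸ hdec'.1.maxDepth_map_arg_lt (ne_nil_of_not_allEq hnae') j) (hsub_col j) hnc hs'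
    rfl, List.map_map]
  exact congrArg (fun l => (delta l).2) (List.map_congr_left fun t ht => (hg t (hsub t ht)).symm)

end DeltaVec

open DeltaVec

theorem delta_trivial_monotone_general {F : Type}
    (T T' : List (Tm F)) (hT : T ≠ [])
    (hsub : ∀ t ∈ T, t ∈ T')
    (htriv : delta T = (Tm.var, some T)) :
    delta T' = (Tm.var, some T') := by
  have hnae : ¬AllEq T := fun hae => by simp [delta_of_allEq hT hae] at htriv
  have hnae' : ¬AllEq T' := fun hae => hnae (hae.of_subset hsub)
  refine delta_of_not_decomposes hnae' fun f m s' hdec => ?_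
  obtain ⟨g, rfl, hg⟩ := hdec.exists_map_depth_lt hnae'
  have hfactor := delta_snd_eq_of_subset hsub hnae (delta_snd_of_decomposes hnae' hdec)
  rw [htriv] at hfactor
  exact delta_snd_map_ne_self hT (fun t ht => hg t (hsub t ht)) hfactor.symm

/-- **triviality of the Δ-vector is monotone.**
Let `T` be a (nonempty) finite sequence of first-order terms.  If `Δ(T) = (α, T)`,
i.e. the Δ-vector of `T` is trivial, then `Δ(T′) = (α, T′)` for every finite sequence
of terms `T′` that contains all terms of `T`. -/
theorem delta_trivial_monotone {F : Type}
    (T T' : List (Tm F)) (hT : T ≠ []) (hT' : T' ≠ [])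
    (hg : ∀ t ∈ T, t.Ground) (hg' : ∀ t ∈ T', t.Ground)
    (hsub : ∀ t ∈ T, t ∈ T')
    (htriv : delta T = (Tm.var, some T)) :
    delta T' = (Tm.var, some T') :=
  delta_trivial_monotone_general T T' hT hsub htriv
end

section
/- The canonical solution is most general: in the single-cut setting, if A is a solution, then C ⊨ A, i.e. the implication C → A is valid, where C is the canonical solution. -/
open FirstOrder Language

namespace SingleCut

variable (L : FirstOrder.Language)

/-- The single-cut setting: a quantifier-free formula `F` with sole free variable `x`,
terms `u i` and `s j` possibly containing the fresh constant `α` (modelled as the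
single free symbol of type `Unit`, universally interpreted). -/
structure Setting (m kk : ℕ) where
  F : L.Formula (Fin 1)
  hF : F.IsQF
  u : Fin m → L.Term Unit
  s : Fin kk → L.Term Unit

variable {L} {m kk : ℕ}

/-- Realization of `Γ = F[x:=u₁], …, F[x:=u_m]`. -/
def GammaR (S : Setting L m kk) (M : Type) [L.Structure M] (v : Unit → M) : Prop :=
  ∀ i : Fin m, Formula.Realize (M := M) (S.F.subst (fun _ => S.u i)) v

/-- `A` is a solution: the sequent `Γ, A ⊃ ⋀_j A[α:=s_j] ⊢` is a tautology. -/
def IsSolution (S : Setting L m kk) (A : L.Formula Unit) : Prop :=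
  ∀ (M : Type) [L.Structure M] [Nonempty M] (v : Unit → M),
    ¬ (GammaR S M v ∧
        (Formula.Realize (M := M) A v →
          ∀ j : Fin kk, Formula.Realize (M := M) (A.subst (fun _ => S.s j)) v))

/-- `A ⊨ B` : the implication `A → B` is valid. -/
def Entails (A B : L.Formula Unit) : Prop :=
  ∀ (M : Type) [L.Structure M] [Nonempty M] (v : Unit → M),
    Formula.Realize (M := M) A v → Formula.Realize (M := M) B v

end SingleCut

open SingleCut

/-- **the canonical solution is most general.**
In the single-cut setting, if `A` is a solution then `C ⊨ A`, where
`C = ⋀_{i=1}^m F[x:=u_i]` is the canonical solution; i.e. in every structure and for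
every value of `α`, if all `F[x:=u_i]` hold then `A` holds. -/
theorem canonical_solution_most_general {m kk : ℕ}
    (L : FirstOrder.Language) (S : Setting L m kk)
    (A : L.Formula Unit) (hAqf : A.IsQF) (hA : IsSolution S A) :
    ∀ (M : Type) [L.Structure M] [Nonempty M] (v : Unit → M),
      GammaR S M v → Formula.Realize (M := M) A v := by
  intro M _ _ v hG
  by_contra h
  exact hA M v ⟨hG, fun hAv => absurd hAv h⟩
end

section
/- In the single-cut setting, suppose A ⊨ B. Then: (1) if the sequent A[α:=s₁],…,A[α:=s_k], Γ ⊢ is not valid, then B is not a solution; (2) if A is a solution, then the sequent Γ ⊢ B is valid; (3) if A is a solution, then the sequent B[α:=s₁],…,B[α:=s_k], Γ ⊢ is valid if and only if B is a solution. -/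
open FirstOrder Language

open SingleCut

/-- In the single-cut setting, suppose `A ⊨ B`.  Then:
(1) if the sequent `A[α:=s₁],…,A[α:=s_k], Γ ⊢` is not valid, then `B` is not a solution;
(2) if `A` is a solution, then the sequent `Γ ⊢ B` is valid;
(3) if `A` is a solution, then the sequent `B[α:=s₁],…,B[α:=s_k], Γ ⊢` is valid iff
`B` is a solution. -/
theorem consequence_criteria {m kk : ℕ}
    (L : FirstOrder.Language) (S : Setting L m kk)
    (A B : L.Formula Unit) (hAqf : A.IsQF) (hBqf : B.IsQF)
    (hAB : Entails A B) :
    ((¬ ∀ (M : Type) [L.Structure M] [Nonempty M] (v : Unit → M),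
        ¬ ((∀ j : Fin kk, Formula.Realize (M := M) (A.subst (fun _ => S.s j)) v) ∧
            GammaR S M v)) →
      ¬ IsSolution S B) ∧
    (IsSolution S A →
      ∀ (M : Type) [L.Structure M] [Nonempty M] (v : Unit → M),
        GammaR S M v → Formula.Realize (M := M) B v) ∧
    (IsSolution S A →
      ((∀ (M : Type) [L.Structure M] [Nonempty M] (v : Unit → M),
          ¬ ((∀ j : Fin kk, Formula.Realize (M := M) (B.subst (fun _ => S.s j)) v) ∧
              GammaR S M v)) ↔
        IsSolution S B)) := by

  have key : ∀ (M : Type) [L.Structure M] [Nonempty M] (v : Unit → M) (j : Fin kk),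
      Formula.Realize (M := M) (A.subst (fun _ => S.s j)) v →
      Formula.Realize (M := M) (B.subst (fun _ => S.s j)) v := by
    intro M _ _ v j h
    rw [Formula.Realize, BoundedFormula.realize_subst] at h ⊢
    exact hAB M _ h
  have part2 : IsSolution S A →
      ∀ (M : Type) [L.Structure M] [Nonempty M] (v : Unit → M),
        GammaR S M v → Formula.Realize (M := M) B v := by
    intro hA M _ _ v hG
    have := hA M v
    by_contra hB
    apply this
    refine ⟨hG, fun hAr j => ?_⟩
    exact absurd (hAB M v hAr) hB
  refine ⟨?_, part2, ?_⟩
  · intro hne hBsol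
    apply hne
    intro M _ _ v ⟨hAs, hG⟩
    exact hBsol M v ⟨hG, fun _ j => key M v j (hAs j)⟩
  · intro hA
    constructor
    · intro hseq M _ _ v ⟨hG, himp⟩
      exact hseq M v ⟨himp (part2 hA M v hG), hG⟩
    · intro hBsol M _ _ v ⟨hBs, hG⟩
      exact hBsol M v ⟨hG, fun _ j => hBs j⟩
end

section
/- Sandwich Lemma: in the single-cut setting, if A and B are solutions and A ⊨ D ⊨ B, then D is a solution. -/
open FirstOrder Language

open SingleCut

/-- **Sandwich Lemma.**
In the single-cut setting, if `A` and `B` are solutions and `A ⊨ D ⊨ B`, then `D` is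
a solution. -/
theorem sandwich_lemma {m kk : ℕ}
    (L : FirstOrder.Language) (S : Setting L m kk)
    (A B D : L.Formula Unit) (hAqf : A.IsQF) (hBqf : B.IsQF) (hDqf : D.IsQF)
    (hA : IsSolution S A) (hB : IsSolution S B)
    (hAD : Entails A D) (hDB : Entails D B) :
    IsSolution S D := by
  intro M _ _ v ⟨hG, hD⟩
  have key : ∀ j : Fin kk, Formula.Realize (M := M) (B.subst (fun _ => S.s j)) v := by
    have hAimp : ¬ (Formula.Realize (M := M) A v →
        ∀ j : Fin kk, Formula.Realize (M := M) (A.subst (fun _ => S.s j)) v) := by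
      intro h; exact hA M v ⟨hG, h⟩
    have hArel : Formula.Realize (M := M) A v := by
      by_contra hc; exact hAimp (fun h => absurd h hc)
    have hDrel := hD (hAD M v hArel)
    intro j
    have := hDrel j
    simp only [Formula.Realize, BoundedFormula.realize_subst] at this ⊢
    exact hDB M _ this
  exact hB M v ⟨hG, fun _ => key⟩
end

section
/- Removing α-free clauses preserves solutionhood: in the single-cut setting, let A be a solution in conjunctive normal form, i.e. A = ⋀_{i=1}^m C_i where each C_i is a clause (a disjunction of literals over atomic formulas), and let A′ be the conjunction of those clauses C_i in which the constant α occurs. Then A′ is a solution. -/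
open FirstOrder Language

namespace SingleCut

variable {L : FirstOrder.Language}

/-- A literal: an atomic formula or the negation of an atomic formula. -/
def IsLiteral (φ : L.Formula Unit) : Prop :=
  φ.IsAtomic ∨ ∃ ψ : L.Formula Unit, ψ.IsAtomic ∧ φ = ψ.not

/-- The disjunction of a list of formulas (a clause as a formula). -/
def clForm (c : List (L.Formula Unit)) : L.Formula Unit :=
  c.foldr (fun φ ψ => φ ⊔ ψ) ⊥

/-- The conjunction of a list of formulas (a CNF as a formula). -/
def cnfForm (cs : List (List (L.Formula Unit))) : L.Formula Unit :=
  (cs.map clForm).foldr (fun φ ψ => φ ⊓ ψ) ⊤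

end SingleCut

open SingleCut

namespace FirstOrder.Language.BoundedFormula

variable {L : Language} {M : Type*} [L.Structure M] {α : Type*} [DecidableEq α] {n : ℕ}

theorem realize_iff_of_eqOn_freeVarFinset {φ : L.BoundedFormula α n} {v v' : α → M}
    (h : ∀ a ∈ φ.freeVarFinset, v a = v' a) (xs : Fin n → M) :
    φ.Realize v xs ↔ φ.Realize v' xs :=
  calc φ.Realize v xs
      ↔ (φ.restrictFreeVar id).Realize (fun a => v a) xs :=
        (realize_restrictFreeVar (f := id) v fun _ => rfl).symm
    _ ↔ (φ.restrictFreeVar id).Realize (fun a => v' a) xs := by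
        rw [show (fun a : φ.freeVarFinset => v a) = fun a : φ.freeVarFinset => v' a from
          funext fun a => h a a.2]
    _ ↔ φ.Realize v' xs := realize_restrictFreeVar (f := id) v' fun _ => rfl

end FirstOrder.Language.BoundedFormula

namespace SingleCut

variable {L : Language} {M : Type} [L.Structure M]

theorem realize_cnfForm (cs : List (List (L.Formula Unit))) (v : Unit → M) :
    (cnfForm cs).Realize v ↔ ∀ c ∈ cs, (clForm c).Realize v := by
  simp [cnfForm, Formula.Realize, BoundedFormula.realize_foldr_inf]

theorem realize_cnfForm_filter {cs : List (List (L.Formula Unit))}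
    {p : List (L.Formula Unit) → Bool} {v : Unit → M} :
    (cnfForm (cs.filter p)).Realize v ↔ ∀ c ∈ cs, p c → (clForm c).Realize v := by
  simp only [realize_cnfForm, List.mem_filter, and_imp]

/-- The `α`-free clauses are closed, so their truth does not depend on the valuation. -/
theorem realize_cnfForm_of_realize_filter_mem_freeVarFinset
    {cs : List (List (L.Formula Unit))} {v w : Unit → M} (hv : (cnfForm cs).Realize v)
    (hw : (cnfForm (cs.filter fun c => decide (() ∈ (clForm c).freeVarFinset))).Realize w) :
    (cnfForm cs).Realize w := by
  rw [realize_cnfForm] at hv ⊢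
  intro c hc
  by_cases hα : () ∈ (clForm c).freeVarFinset
  · exact realize_cnfForm_filter.mp hw c hc (decide_eq_true hα)
  · refine (BoundedFormula.realize_iff_of_eqOn_freeVarFinset ?_ _).mp (hv c hc)
    rintro ⟨⟩ h
    exact absurd h hα

end SingleCut

theorem remove_alpha_free_clauses_general {m kk : ℕ}
    (L : FirstOrder.Language) (S : Setting L m kk)
    (clauses : List (List (L.Formula Unit)))
    (hsol : IsSolution S (cnfForm clauses)) :
    IsSolution S
      (cnfForm (clauses.filter
        (fun c => decide (() ∈ (clForm c).freeVarFinset)))) := by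
  intro M _ _ v ⟨hΓ, himp⟩
  refine hsol M v ⟨hΓ, fun hA j => ?_⟩
  have hA' : (cnfForm (clauses.filter
      fun c => decide (() ∈ (clForm c).freeVarFinset))).Realize v :=
    realize_cnfForm_filter.mpr fun c hc _ => (realize_cnfForm clauses v).mp hA c hc
  have hsA' := himp hA' j
  simp only [Formula.Realize, BoundedFormula.realize_subst] at hsA' ⊢
  exact realize_cnfForm_of_realize_filter_mem_freeVarFinset hA hsA'

/-- **removing α-free clauses preserves solutionhood.**
In the single-cut setting, let `A = ⋀_i C_i` be a solution in conjunctive normal form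
(each `C_i` a clause, i.e. a disjunction of literals), and let `A′` be the conjunction
of those clauses `C_i` in which the constant `α` occurs.  Then `A′` is a solution. -/
theorem remove_alpha_free_clauses {m kk : ℕ}
    (L : FirstOrder.Language) (S : Setting L m kk)
    (clauses : List (List (L.Formula Unit)))
    (hlit : ∀ c ∈ clauses, ∀ φ ∈ c, IsLiteral φ)
    (hsol : IsSolution S (cnfForm clauses)) :
    IsSolution S
      (cnfForm (clauses.filter
        (fun c => decide (() ∈ (clForm c).freeVarFinset)))) :=
  remove_alpha_free_clauses_general L S clauses hsol
end

section
/- Validity of the intermediary sequents in the exponential-compression example: fix n ≥ 1 and k < n. Let a be a constant, f a unary function symbol, P a unary predicate, and α₁,…,αₙ fresh constants with the convention α_{n+1} = a. Define S_j = { α_{j+1}, f^{2^j}(α_{j+1}) } and T_j = { f^i(α_{j+1}) : 0 ≤ i ≤ 2^{j+1} − 1 } for 0 ≤ j ≤ n, and F_j = (¬P(α_j) ∨ P(f^{2^j}(α_j))) ⊃ ⋀_{s ∈ S_j}(¬P(s) ∨ P(f^{2^j}(s))) for 1 ≤ j ≤ n. Then the sequent F_n, …, F_{n−k+1}, F_{n−k},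 P(a), (P(s) ⊃ P(f(s)))_{s ∈ T_{n−k−1}} ⊢ P(f^{2^{n+1}}(a)) is valid. -/
/-- **validity of the intermediary sequents in the
exponential-compression example.**

Fix `n ≥ 1` and `k < n`.  Over the signature `{a, α₁,…,αₙ, f, P}` (modelled
semantically: `M` an arbitrary structure, `fM` the interpretation of `f`, `PM` of `P`,
and `al j` the interpretation of the constant `α_j`, with the convention
`α_{n+1} = a`, i.e. `a` is interpreted as `al (n+1)`), let
`S_j = {α_{j+1}, f^{2^j}(α_{j+1})}`,
`T_j = { fⁱ(α_{j+1}) : 0 ≤ i ≤ 2^{j+1} − 1 }`, and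
`F_j = (¬P(α_j) ∨ P(f^{2^j}(α_j))) ⊃ ⋀_{s∈S_j} (¬P(s) ∨ P(f^{2^j}(s)))`.
Then the sequent
`F_n, …, F_{n−k+1}, F_{n−k}, P(a), (P(s) ⊃ P(f(s)))_{s ∈ T_{n−k−1}} ⊢ P(f^{2^{n+1}}(a))`
is valid. -/
theorem intermediary_sequent_valid
    (n k : ℕ) (hn : 1 ≤ n) (hk : k < n)
    (M : Type) (fM : M → M) (PM : M → Prop) (al : ℕ → M) :
    (∀ j : ℕ, n - k ≤ j → j ≤ n →
        ((¬ PM (al j) ∨ PM (fM^[2 ^ j] (al j))) →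
          ∀ x : M, (x = al (j + 1) ∨ x = fM^[2 ^ j] (al (j + 1))) →
            (¬ PM x ∨ PM (fM^[2 ^ j] x)))) →
    PM (al (n + 1)) →
    (∀ i : ℕ, i ≤ 2 ^ (n - k) - 1 →
        (PM (fM^[i] (al (n - k))) → PM (fM (fM^[i] (al (n - k)))))) →
    PM (fM^[2 ^ (n + 1)] (al (n + 1))) := by
  intro hF ha hT
  -- base chain: P(α_{n-k}) → P(f^m(α_{n-k})) for m ≤ 2^(n-k)
  have chain : ∀ m : ℕ, m ≤ 2 ^ (n - k) → PM (al (n - k)) → PM (fM^[m] (al (n - k))) := by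
    intro m
    induction m with
    | zero => intro _ h; simpa using h
    | succ m ih =>
      intro hm h
      have h1 : PM (fM^[m] (al (n - k))) := ih (Nat.le_of_succ_le hm) h
      have h2 := hT m (by omega) h1
      simpa [Function.iterate_succ_apply'] using h2
  -- inductive climb
  have main : ∀ d : ℕ, d ≤ k + 1 →
      (¬ PM (al (n - k + d)) ∨ PM (fM^[2 ^ (n - k + d)] (al (n - k + d)))) := by
    intro d
    induction d with
    | zero =>
      intro _
      by_cases h : PM (al (n - k))
      · right; simpa using chain (2 ^ (n - k)) le_rfl h
      · left; simpa using h
    | succ d ih =>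
      intro hd
      have hj := ih (by omega)
      set j := n - k + d with hjdef
      have h1 := hF j (by omega) (by omega) hj (al (j + 1)) (Or.inl rfl)
      have h2 := hF j (by omega) (by omega) hj (fM^[2 ^ j] (al (j + 1))) (Or.inr rfl)
      have hiter : fM^[2 ^ j] (fM^[2 ^ j] (al (j + 1))) = fM^[2 ^ (j + 1)] (al (j + 1)) := by
        rw [← Function.iterate_add_apply]
        congr 1
        ring
      have hsum : n - k + (d + 1) = j + 1 := by omega
      rw [hsum]
      rcases h1 with h1 | h1
      · exact Or.inl h1
      · rcases h2 with h2 | h2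
        · exact absurd h1 h2
        · right; rw [← hiter]; exact h2
  have := main (k + 1) le_rfl
  have heq : n - k + (k + 1) = n + 1 := by omega
  rw [heq] at this
  rcases this with h | h
  · exact absurd ha h
  · exact h
end
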